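/- (Invariant of iterative sampling.) Consider a hitting-set instance with sets S_1,…,S_N ⊆ {1,…,n}, weights w_i ≥ 0 not all zero, p ∈ (0, 1/2], Δ = max_i |S_i| ≥ 1, T = ⌈8pΔ⌉, q = 4p/T, τ = ∑_i w_i·e^{−|S_i|p}. Fix t with 2 ≤ t ≤ T and fixed subsets H^1,…,H^{t−1} ⊆ {1,…,n}. Let G^t = {j : X^t_j = 1}, where X^t_1,…,X^t_n are pairwise independent {0,1}-valued random variables with P(X^t_j = 1) = q. Then E[f^t(G^t)] ≤ f^{t−1}(H^{t−1}), where for a subset G ⊆ {1,…,n} with indicators X_j = 1[j∈G] and Y_i(G) = ∑_{j∈S_i} X_j − ∑_{j<k, j,k∈S_i} X_j X_k, one defines f^s(G) = (∑_{i : S_i ∩ (H^1∪⋯∪H^{s−1}) = ∅} (1 − Y_i(G))·w_i·e^{−|S_i|(T−s)p/T})/τ + (|G| + ∑_{j=1}^{s−1}|H^j| + 4n(T−s)p/T)/(4np). -/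

import Mathlib

/-!
Only pairs of the indicators `X_j` occur in `f^t`, so pairwise independence determines its
mean: `E Y_i = |S_i| q - C(|S_i|, 2) q²` and `E |G^t| = n q = 4 n p / T`. Since `|S_i| q ≤ 1/2`,
`1 - E Y_i ≤ e^{-|S_i| p / T}`, exactly the factor by which the weight of a set that is still
unhit shrinks from step `t - 1` to step `t`. A set hit by `H^{t-1}` drops out at step `t` but
contributed a nonnegative term at step `t - 1`, because `Y_i ≤ 1` on indicator vectors, and
the counting part of `f` is the same on both sides.
-/

open MeasureTheory ProbabilityTheory

open Classical in
/-- The value `f^t(G)` of the paper, written in terms of the indicator values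
`X j = 1[j ∈ G]` of the set `G` (so `|G| = ∑_j X j` and
`Y_i(G) = ∑_{j∈S_i} X_j − ∑_{j<l ∈ S_i} X_j X_l`). -/
noncomputable def fGen {n N : ℕ} (S : Fin N → Finset (Fin n)) (w : Fin N → ℝ)
    (p τ : ℝ) (T t : ℕ) (H : ℕ → Finset (Fin n)) (X : Fin n → ℝ) : ℝ :=
  (∑ i ∈ Finset.univ.filter (fun i => ∀ j ∈ Finset.Icc 1 (t - 1), S i ∩ H j = ∅),
      (1 - (∑ j ∈ S i, X j - ∑ j ∈ S i, ∑ l ∈ (S i).filter (fun l => j < l), X j * X l)) *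
        w i * Real.exp (-((S i).card : ℝ) * ((T - t : ℕ) : ℝ) * p / (T : ℝ))) / τ +
    ((∑ j, X j) + (∑ j ∈ Finset.Icc 1 (t - 1), ((H j).card : ℝ)) +
        4 * (n : ℝ) * ((T - t : ℕ) : ℝ) * p / (T : ℝ)) / (4 * (n : ℝ) * p)

/-- The indicator function of a finite set `G ⊆ {1,…,n}`. -/
noncomputable def indic {n : ℕ} (G : Finset (Fin n)) : Fin n → ℝ :=
  fun j => if j ∈ G then 1 else 0

open Finset

theorem sum_card_filter_lt_eq_choose_two {α : Type*} [LinearOrder α] (s : Finset α) :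
    ∑ j ∈ s, (s.filter (fun l => j < l)).card = s.card.choose 2 := by
  induction s using Finset.induction_on_max with
  | empty => simp
  | insert a s hlt ih =>
    have has : a ∉ s := fun h => lt_irrefl a (hlt a h)
    have hnew : ∀ j ∈ s,
        (insert a s).filter (fun l => j < l) = insert a (s.filter (fun l => j < l)) :=
      fun j hj => by rw [filter_insert, if_pos (hlt j hj)]
    have htop : (insert a s).filter (fun l => a < l) = ∅ :=
      filter_eq_empty_iff.2 fun l hl =>
        not_lt.2 ((mem_insert.1 hl).elim le_of_eq fun h => (hlt l h).le)
    rw [sum_insert has, htop, card_empty, zero_add, sum_congr rfl fun j hj => by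
      rw [hnew j hj, card_insert_of_notMem fun h => (mem_filter.1 h).1 |> has], sum_add_distrib,
      ih, card_insert_of_notMem has, Nat.choose_succ_succ', Nat.choose_one_right]
    simp [add_comm]

theorem le_choose_two_add_one (k : ℕ) : k ≤ k.choose 2 + 1 := by
  cases k with
  | zero => simp
  | succ k => rw [Nat.choose_succ_succ', Nat.choose_one_right]; omega

theorem choose_two_le_sq_div_two (k : ℕ) : (k.choose 2 : ℝ) ≤ (k : ℝ) ^ 2 / 2 := by
  rw [Nat.cast_choose_two]
  nlinarith [k.cast_nonneg (α := ℝ)]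

theorem one_sub_add_sq_div_two_le_exp_neg_div_four {x : ℝ} (h0 : 0 ≤ x) (h1 : x ≤ 3 / 2) :
    1 - x + x ^ 2 / 2 ≤ Real.exp (-(x / 4)) := by
  have := Real.add_one_le_exp (-(x / 4))
  nlinarith

theorem one_sub_mul_add_choose_two_mul_sq_le_exp {k : ℕ} {q : ℝ} (hq : 0 ≤ q)
    (hkq : k * q ≤ 3 / 2) :
    1 - (k * q - (k.choose 2 : ℝ) * q ^ 2) ≤ Real.exp (-(k * q / 4)) := by
  have hchoose : (k.choose 2 : ℝ) * q ^ 2 ≤ (k * q) ^ 2 / 2 := by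
    nlinarith [choose_two_le_sq_div_two k, sq_nonneg q]
  have := one_sub_add_sq_div_two_le_exp_neg_div_four (mul_nonneg k.cast_nonneg hq) hkq
  linarith

theorem one_sub_mean_mul_exp_le_mul_exp {k : ℕ} {p q T m w : ℝ} (hT : 0 < T) (hp : 0 ≤ p)
    (hq : q = 4 * p / T) (hk : 8 * k * p ≤ T) (hw : 0 ≤ w) :
    (1 - (k * q - (k.choose 2 : ℝ) * q ^ 2)) * w * Real.exp (-k * m * p / T)
      ≤ w * Real.exp (-k * (m + 1) * p / T) := by
  have hkq : k * q ≤ 3 / 2 := by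
    rw [hq, mul_div_assoc', div_le_iff₀ hT]
    linarith
  have hexp : Real.exp (-k * (m + 1) * p / T)
      = Real.exp (-k * m * p / T) * Real.exp (-(k * q / 4)) := by
    rw [← Real.exp_add, hq]
    congr 1
    field_simp
    ring
  rw [hexp]
  linear_combination mul_le_mul_of_nonneg_right
    (one_sub_mul_add_choose_two_mul_sq_le_exp (hq ▸ by positivity) hkq)
    (mul_nonneg hw (Real.exp_pos (-k * m * p / T)).le)

section Bonferroni

variable {α : Type*} [LinearOrder α]

-- The paper's `Y_i`: inclusion–exclusion for `1[s ∩ G ≠ ∅]` cut after the pair terms.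
def bonferroni2 (s : Finset α) (x : α → ℝ) : ℝ :=
  ∑ j ∈ s, x j - ∑ j ∈ s, ∑ l ∈ s.filter (fun l => j < l), x j * x l

theorem bonferroni2_indicator (s G : Finset α) :
    bonferroni2 s (fun j => if j ∈ G then 1 else 0)
      = ((s ∩ G).card : ℝ) - ((s ∩ G).card.choose 2 : ℝ) := by
  simp only [bonferroni2, mul_ite, ite_mul, one_mul, zero_mul, mul_zero, sum_ite_mem, sum_boole,
    filter_const, apply_ite card, card_empty, Nat.cast_ite, Nat.cast_zero, filter_inter]
  rw [← Nat.cast_sum, sum_card_filter_lt_eq_choose_two, sum_const, nsmul_one]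

theorem bonferroni2_indicator_le_one (s G : Finset α) :
    bonferroni2 s (fun j => if j ∈ G then 1 else 0) ≤ 1 := by
  rw [bonferroni2_indicator, sub_le_iff_le_add, add_comm]
  exact_mod_cast le_choose_two_add_one _

theorem bonferroni2_indicator_of_inter_eq_empty {s G : Finset α} (h : s ∩ G = ∅) :
    bonferroni2 s (fun j => if j ∈ G then 1 else 0) = 0 := by
  simp [bonferroni2_indicator, h]

end Bonferroni

theorem eq_indicator_of_forall_eq_zero_or_one {Ω : Type*} {f : Ω → ℝ}
    (h01 : ∀ ω, f ω = 0 ∨ f ω = 1) : f = {ω | f ω = 1}.indicator 1 := by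
  funext ω
  rcases h01 ω with h | h <;> simp [Set.indicator, h]

section Expectation

variable {Ω : Type*} [MeasurableSpace Ω] {P : Measure Ω}

theorem integrable_of_forall_eq_zero_or_one [IsFiniteMeasure P] {f : Ω → ℝ} (hf : Measurable f)
    (h01 : ∀ ω, f ω = 0 ∨ f ω = 1) : Integrable f P := by
  rw [eq_indicator_of_forall_eq_zero_or_one h01]
  exact (integrable_const 1).indicator (hf (measurableSet_singleton 1))

theorem integral_of_forall_eq_zero_or_one {f : Ω → ℝ} (hf : Measurable f)
    (h01 : ∀ ω, f ω = 0 ∨ f ω = 1) : ∫ ω, f ω ∂P = P.real {ω | f ω = 1} := by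
  conv_lhs => rw [eq_indicator_of_forall_eq_zero_or_one h01]
  exact integral_indicator_one (hf (measurableSet_singleton 1))

variable {ι : Type*} [LinearOrder ι] {X : ι → Ω → ℝ}

theorem integrable_bonferroni2 (hint : ∀ j, Integrable (X j) P)
    (hindep : ∀ j k, j ≠ k → IndepFun (X j) (X k) P) (s : Finset ι) :
    Integrable (fun ω => bonferroni2 s (X · ω)) P :=
  (integrable_finsetSum _ fun j _ => hint j).sub <| integrable_finsetSum _ fun j _ =>
    integrable_finsetSum _ fun l hl =>
      (hindep j l (mem_filter.1 hl).2.ne).integrable_mul (hint j) (hint l)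

theorem integral_bonferroni2 [IsProbabilityMeasure P] {q : ℝ} (hint : ∀ j, Integrable (X j) P)
    (hmean : ∀ j, ∫ ω, X j ω ∂P = q) (hindep : ∀ j k, j ≠ k → IndepFun (X j) (X k) P)
    (s : Finset ι) :
    ∫ ω, bonferroni2 s (X · ω) ∂P = s.card * q - (s.card.choose 2 : ℝ) * q ^ 2 := by
  have hprod : ∀ j ∈ s, ∀ l ∈ s.filter (fun l => j < l),
      Integrable (fun ω => X j ω * X l ω) P :=
    fun j _ l hl => (hindep j l (mem_filter.1 hl).2.ne).integrable_mul (hint j) (hint l)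
  have hpair : ∀ j ∈ s, ∀ l ∈ s.filter (fun l => j < l), ∫ ω, X j ω * X l ω ∂P = q ^ 2 :=
    fun j _ l hl => by
      rw [(hindep j l (mem_filter.1 hl).2.ne).integral_fun_mul_eq_mul_integral
        (hint j).aestronglyMeasurable (hint l).aestronglyMeasurable, hmean, hmean, sq]
  simp only [bonferroni2]
  rw [integral_sub (integrable_finsetSum _ fun j _ => hint j)
      (integrable_finsetSum _ fun j hj => integrable_finsetSum _ (hprod j hj)),
    integral_finsetSum _ fun j _ => hint j,
    integral_finsetSum _ fun j hj => integrable_finsetSum _ (hprod j hj),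
    sum_congr rfl fun j hj => integral_finsetSum _ (hprod j hj),
    sum_congr rfl fun j hj => sum_congr rfl (hpair j hj)]
  simp only [hmean, sum_const, nsmul_eq_mul, ← sum_mul, ← Nat.cast_sum,
    sum_card_filter_lt_eq_choose_two]

end Expectation

section Potential

variable {n N : ℕ} (S : Fin N → Finset (Fin n)) (w : Fin N → ℝ) (p τ : ℝ) (T : ℕ)
  (H : ℕ → Finset (Fin n))

-- Classical, as in `fGen`, so that `fGen` unfolds to `potential` by `rfl`.
open Classical in
noncomputable def unhit (t : ℕ) : Finset (Fin N) :=
  univ.filter (fun i => ∀ j ∈ Icc 1 (t - 1), S i ∩ H j = ∅)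

-- `f^t` with `Y_i(G)` and `|G|` replaced by free values `y i` and `g`; being affine in them,
-- it commutes with expectation.
noncomputable def potential (t : ℕ) (y : Fin N → ℝ) (g : ℝ) : ℝ :=
  (∑ i ∈ unhit S H t,
      (1 - y i) * w i * Real.exp (-((S i).card : ℝ) * ((T - t : ℕ) : ℝ) * p / (T : ℝ))) / τ +
    (g + (∑ j ∈ Icc 1 (t - 1), ((H j).card : ℝ)) +
        4 * (n : ℝ) * ((T - t : ℕ) : ℝ) * p / (T : ℝ)) / (4 * (n : ℝ) * p)

theorem mem_unhit {t : ℕ} {i : Fin N} :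
    i ∈ unhit S H t ↔ ∀ j ∈ Icc 1 (t - 1), S i ∩ H j = ∅ := by
  simp [unhit]

theorem unhit_anti {t t' : ℕ} (h : t' ≤ t) : unhit S H t ⊆ unhit S H t' :=
  fun i hi => (mem_unhit S H).2 fun j hj =>
    (mem_unhit S H).1 hi j (Icc_subset_Icc_right (by omega) hj)

theorem inter_eq_empty_of_mem_unhit {t i : ℕ} {k : Fin N} (hk : k ∈ unhit S H t) (hi1 : 1 ≤ i)
    (hit : i < t) : S k ∩ H i = ∅ :=
  (mem_unhit S H).1 hk i (mem_Icc.2 ⟨hi1, by omega⟩)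

theorem fGen_eq_potential (t : ℕ) (x : Fin n → ℝ) :
    fGen S w p τ T t H x = potential S w p τ T H t (fun i => bonferroni2 (S i) x) (∑ j, x j) :=
  rfl

theorem integral_potential {Ω : Type*} [MeasurableSpace Ω] {P : Measure Ω}
    [IsProbabilityMeasure P] (t : ℕ) {y : Fin N → Ω → ℝ} {g : Ω → ℝ} (hy : ∀ i, Integrable (y i) P)
    (hg : Integrable g P) :
    ∫ ω, potential S w p τ T H t (fun i => y i ω) (g ω) ∂P
      = potential S w p τ T H t (fun i => ∫ ω, y i ω ∂P) (∫ ω, g ω ∂P) := by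
  have hterm : ∀ i, Integrable (fun ω => (1 - y i ω) * w i *
      Real.exp (-((S i).card : ℝ) * ((T - t : ℕ) : ℝ) * p / (T : ℝ))) P :=
    fun i => (((integrable_const 1).sub (hy i)).mul_const _).mul_const _
  have hsum : Integrable (fun ω => ∑ i ∈ unhit S H t, (1 - y i ω) * w i *
      Real.exp (-((S i).card : ℝ) * ((T - t : ℕ) : ℝ) * p / (T : ℝ))) P :=
    integrable_finsetSum _ fun i _ => hterm i
  have hgH : Integrable (fun ω => g ω + ∑ j ∈ Icc 1 (t - 1), ((H j).card : ℝ)) P :=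
    hg.add (integrable_const _)
  have hcount : Integrable (fun ω => g ω + ∑ j ∈ Icc 1 (t - 1), ((H j).card : ℝ) +
      4 * (n : ℝ) * ((T - t : ℕ) : ℝ) * p / (T : ℝ)) P :=
    hgH.add (integrable_const _)
  simp only [potential]
  rw [integral_add (hsum.div_const _) (hcount.div_const _), integral_div, integral_div,
    integral_finsetSum _ fun i _ => hterm i, integral_add hgH (integrable_const _),
    integral_add hg (integrable_const _)]
  simp only [integral_mul_const, integral_sub (integrable_const _) (hy _), integral_const,
    probReal_univ, one_smul]

theorem potential_mean_le_potential_pred (hw : ∀ i, 0 ≤ w i) (hτ : 0 ≤ τ) (hp : 0 ≤ p)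
    (hS : ∀ i, 8 * ((S i).card : ℝ) * p ≤ T) {q : ℝ} (hq : q = 4 * p / T) {t : ℕ} (ht2 : 2 ≤ t)
    (htT : t ≤ T) :
    potential S w p τ T H t (fun i => (S i).card * q - ((S i).card.choose 2 : ℝ) * q ^ 2) (n * q)
      ≤ potential S w p τ T H (t - 1) (fun i => bonferroni2 (S i) (indic (H (t - 1))))
          (H (t - 1)).card := by
  have hT : (0 : ℝ) < T := by exact_mod_cast (by omega : 0 < T)
  have hstep : ((T - (t - 1) : ℕ) : ℝ) = ((T - t : ℕ) : ℝ) + 1 := by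
    rw [show T - (t - 1) = T - t + 1 by omega, Nat.cast_succ]
  unfold potential
  refine add_le_add (div_le_div_of_nonneg_right ((sum_le_sum fun i hi => ?_).trans
    (sum_le_sum_of_subset_of_nonneg (unhit_anti S H (by omega)) fun i _ _ => ?_)) hτ)
    (le_of_eq ?_)
  · have hhit : bonferroni2 (S i) (indic (H (t - 1))) = 0 :=
      bonferroni2_indicator_of_inter_eq_empty
        (inter_eq_empty_of_mem_unhit S H hi (by omega) (by omega))
    dsimp only
    rw [hhit, sub_zero, one_mul, hstep]
    exact one_sub_mean_mul_exp_le_mul_exp hT hp hq (hS i) (hw i)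
  · exact mul_nonneg (mul_nonneg (sub_nonneg.2 (bonferroni2_indicator_le_one _ _)) (hw i))
      (Real.exp_pos _).le
  · have hsplit : ∑ j ∈ Icc 1 (t - 1), ((H j).card : ℝ)
        = ∑ j ∈ Icc 1 (t - 1 - 1), ((H j).card : ℝ) + (H (t - 1)).card := by
      have e : t - 1 = t - 1 - 1 + 1 := by omega
      conv_lhs => rw [e]
      rw [sum_Icc_succ_top (by omega), ← e]
    rw [hsplit, hstep, hq]
    field_simp
    ring

end Potential

theorem stmt12_general {Ω : Type*} [MeasurableSpace Ω] (P : Measure Ω) [IsProbabilityMeasure P]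
    (n N : ℕ)
    (S : Fin N → Finset (Fin n)) (w : Fin N → ℝ)
    (hw : ∀ i, 0 ≤ w i)
    (p : ℝ) (hp0 : 0 < p)
    (Δ : ℕ) (hΔ : Δ = Finset.univ.sup (fun i => (S i).card))
    (T : ℕ) (hT : T = ⌈8 * p * (Δ : ℝ)⌉₊)
    (q : ℝ) (hq : q = 4 * p / (T : ℝ))
    (τ : ℝ) (hτ : τ = ∑ i, w i * Real.exp (-((S i).card : ℝ) * p))
    (t : ℕ) (ht2 : 2 ≤ t) (htT : t ≤ T)
    (H : ℕ → Finset (Fin n))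
    (X : Fin n → Ω → ℝ)
    (hmeas : ∀ j, Measurable (X j))
    (h01 : ∀ j ω, X j ω = 0 ∨ X j ω = 1)
    (hprob : ∀ j, P {ω | X j ω = 1} = ENNReal.ofReal q)
    (hindep : ∀ j k : Fin n, j ≠ k → IndepFun (X j) (X k) P) :
    ∫ ω, fGen S w p τ T t H (fun j => X j ω) ∂P ≤
      fGen S w p τ T (t - 1) H (indic (H (t - 1))) := by
  have hq0 : 0 ≤ q := hq ▸ by positivity
  have hint : ∀ j, Integrable (X j) P := fun j =>
    integrable_of_forall_eq_zero_or_one (hmeas j) (h01 j)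
  have hmean : ∀ j, ∫ ω, X j ω ∂P = q := fun j => by
    rw [integral_of_forall_eq_zero_or_one (hmeas j) (h01 j), measureReal_def, hprob j,
      ENNReal.toReal_ofReal hq0]
  have hτ0 : 0 ≤ τ := hτ ▸ sum_nonneg fun i _ => mul_nonneg (hw i) (Real.exp_pos _).le
  have hS : ∀ i, 8 * ((S i).card : ℝ) * p ≤ T := fun i => by
    have hcard : ((S i).card : ℝ) ≤ Δ := by
      exact_mod_cast hΔ ▸ le_sup (f := fun i => (S i).card) (mem_univ i)
    calc 8 * ((S i).card : ℝ) * p ≤ 8 * p * Δ := by nlinarith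
      _ ≤ T := hT ▸ Nat.le_ceil _
  calc ∫ ω, fGen S w p τ T t H (fun j => X j ω) ∂P
      = potential S w p τ T H t (fun i => (S i).card * q - ((S i).card.choose 2 : ℝ) * q ^ 2)
          (n * q) := by
        simp only [fGen_eq_potential]
        rw [integral_potential S w p τ T H t (integrable_bonferroni2 hint hindep <| S ·)
          (integrable_finsetSum _ fun j _ => hint j), integral_finsetSum _ fun j _ => hint j]
        simp [integral_bonferroni2 hint hmean hindep, hmean]
    _ ≤ potential S w p τ T H (t - 1) (fun i => bonferroni2 (S i) (indic (H (t - 1))))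
          (H (t - 1)).card :=
        potential_mean_le_potential_pred S w p τ T H hw hτ0 hp0.le hS hq ht2 htT
    _ = fGen S w p τ T (t - 1) H (indic (H (t - 1))) := by
        rw [fGen_eq_potential]
        congr 1
        simp [indic]

/-- Invariant of iterative sampling: for `2 ≤ t ≤ T` and fixed subsets
`H^1,…,H^{t−1}`, if `G^t` is sampled via pairwise independent `{0,1}`-valued
indicators with success probability `q = 4p/T`, then `E[f^t(G^t)] ≤ f^{t−1}(H^{t−1})`. -/
theorem stmt12 {Ω : Type*} [MeasurableSpace Ω] (P : Measure Ω) [IsProbabilityMeasure P]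
    (n N : ℕ) (hn : 1 ≤ n)
    (S : Fin N → Finset (Fin n)) (w : Fin N → ℝ)
    (hw : ∀ i, 0 ≤ w i) (hw0 : ∃ i, w i ≠ 0)
    (p : ℝ) (hp0 : 0 < p) (hp : p ≤ 1 / 2)
    (Δ : ℕ) (hΔ : Δ = Finset.univ.sup (fun i => (S i).card)) (hΔ1 : 1 ≤ Δ)
    (T : ℕ) (hT : T = ⌈8 * p * (Δ : ℝ)⌉₊)
    (q : ℝ) (hq : q = 4 * p / (T : ℝ))
    (τ : ℝ) (hτ : τ = ∑ i, w i * Real.exp (-((S i).card : ℝ) * p))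
    (t : ℕ) (ht2 : 2 ≤ t) (htT : t ≤ T)
    (H : ℕ → Finset (Fin n))
    (X : Fin n → Ω → ℝ)
    (hmeas : ∀ j, Measurable (X j))
    (h01 : ∀ j ω, X j ω = 0 ∨ X j ω = 1)
    (hprob : ∀ j, P {ω | X j ω = 1} = ENNReal.ofReal q)
    (hindep : ∀ j k : Fin n, j ≠ k → IndepFun (X j) (X k) P) :
    ∫ ω, fGen S w p τ T t H (fun j => X j ω) ∂P ≤
      fGen S w p τ T (t - 1) H (indic (H (t - 1))) :=
  stmt12_general P n N S w hw p hp0 Δ hΔ T hT q hq τ hτ t ht2 htT H X hmeas h01 hprob hindep
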